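/- Let U : ℝ → ℝ be continuous, k ∈ ℝ, and let ψ : ℝ → ℂ be continuously differentiable on ℝ and twice continuously differentiable on ℝ \ {α}, satisfying ψ''(x) = (−k² + 2U(x))ψ(x) for all x ≠ α. Then ψ is twice differentiable at α, ψ''(α) = (−k² + 2U(α))ψ(α), and ψ'' is continuous at α. -/
import Mathlib

open Filter Topology

theorem stmt_8 (U : ℝ → ℝ) (hU : Continuous U) (k α : ℝ) (ψ : ℝ → ℂ)
    (hψ : Differentiable ℝ ψ) (hψ' : Continuous (deriv ψ))
    (hψ'' : ∀ x : ℝ, x ≠ α → DifferentiableAt ℝ (deriv ψ) x)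
    (hψ''cont : ContinuousOn (deriv (deriv ψ)) {α}ᶜ)
    (hode : ∀ x : ℝ, x ≠ α →
      deriv (deriv ψ) x = ((-k ^ 2 + 2 * U x : ℝ) : ℂ) * ψ x) :
    DifferentiableAt ℝ (deriv ψ) α ∧
      deriv (deriv ψ) α = ((-k ^ 2 + 2 * U α : ℝ) : ℂ) * ψ α ∧
      ContinuousAt (deriv (deriv ψ)) α := by
  set L : ℂ := ((-k ^ 2 + 2 * U α : ℝ) : ℂ) * ψ α with hL
  have hcontRHS : Continuous (fun x : ℝ => ((-k ^ 2 + 2 * U x : ℝ) : ℂ) * ψ x) := by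
    exact (Complex.continuous_ofReal.comp (by continuity)).mul hψ.continuous
  have htend : Tendsto (deriv (deriv ψ)) (𝓝[≠] α) (𝓝 L) := by
    have h1 : Tendsto (fun x : ℝ => ((-k ^ 2 + 2 * U x : ℝ) : ℂ) * ψ x) (𝓝[≠] α) (𝓝 L) :=
      (hcontRHS.tendsto α).mono_left nhdsWithin_le_nhds
    refine h1.congr' ?_
    filter_upwards [self_mem_nhdsWithin] with x hx
    exact (hode x hx).symm
  have hdiffOn : ∀ s : Set ℝ, (∀ x ∈ s, x ≠ α) → DifferentiableOn ℝ (deriv ψ) s := by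
    intro s hs x hx
    exact (hψ'' x (hs x hx)).differentiableWithinAt
  have hright : HasDerivWithinAt (deriv ψ) L (Set.Ici α) α := by
    refine hasDerivWithinAt_Ici_of_tendsto_deriv (s := Set.Ioi α)
      (hdiffOn _ fun x hx => ne_of_gt hx) (hψ'.continuousWithinAt) self_mem_nhdsWithin ?_
    exact htend.mono_left (nhdsWithin_mono _ fun x hx => ne_of_gt hx)
  have hleft : HasDerivWithinAt (deriv ψ) L (Set.Iic α) α := by
    refine hasDerivWithinAt_Iic_of_tendsto_deriv (s := Set.Iio α)
      (hdiffOn _ fun x hx => ne_of_lt hx) (hψ'.continuousWithinAt) self_mem_nhdsWithin ?_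
    exact htend.mono_left (nhdsWithin_mono _ fun x hx => ne_of_lt hx)
  have hderivAt : HasDerivAt (deriv ψ) L α := by
    have := hleft.union hright
    rwa [Set.Iic_union_Ici, hasDerivWithinAt_univ] at this
  have hd : DifferentiableAt ℝ (deriv ψ) α := hderivAt.differentiableAt
  have heq : deriv (deriv ψ) α = L := hderivAt.deriv
  refine ⟨hd, heq, ?_⟩
  rw [ContinuousAt, heq]
  rw [← nhdsNE_sup_pure α]
  exact htend.sup (by rw [← heq]; exact tendsto_pure_nhds _ _)
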